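/- arXiv:2208.07199 — 3 statements merged into one kernel-verified Lean document; each statement's English description precedes it below -/
import Mathlib

section
/- Let G be a connected split graph with partition (K, S), and let I be a distance-3 independent set of G with |I| ≥ 2. Then for every x ∈ I and every neighbor y of x with y ∉ I, the set (I \ {x}) ∪ {y} is not a distance-3 independent set of G. (That is, no token-slide is possible from any distance-3 independent set of size at least 2 in a connected split graph.) -/
/-! Every vertex of I must lie in S: a vertex of the clique K is within distance 2 of every vertex
of a connected split graph (a vertex of S has a neighbour, necessarily in K). Hence a token on
x ∈ I ⊆ S can only slide to some y ∈ K, which is then within distance 2 of the other tokens. -/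

def DdIS {V : Type*} (G : SimpleGraph V) (d : ℕ) (I : Set V) : Prop :=
  ∀ u ∈ I, ∀ v ∈ I, u ≠ v → (d : ℕ∞) ≤ G.edist u v

lemma DdIS.eq_of_edist_le_two {V : Type*} {G : SimpleGraph V} {I : Set V} (hI : DdIS G 3 I)
    {u v : V} (hu : u ∈ I) (hv : v ∈ I) (huv : G.edist u v ≤ 2) : u = v := by
  by_contra hne
  have := (hI u hu v hv hne).trans huv
  norm_num at this

namespace SimpleGraph

variable {V : Type*} {G : SimpleGraph V} {K S : Set V}

lemma mem_clique_of_adj_of_mem_indep (hcover : ∀ x : V, x ∈ K ∨ x ∈ S)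
    (hS : ∀ a ∈ S, ∀ b ∈ S, ¬ G.Adj a b) {a b : V} (ha : a ∈ S) (hab : G.Adj a b) : b ∈ K :=
  (hcover b).resolve_right fun hb ↦ hS a ha b hb hab

lemma edist_le_one_of_mem_clique (hK : ∀ a ∈ K, ∀ b ∈ K, a ≠ b → G.Adj a b) {a b : V}
    (ha : a ∈ K) (hb : b ∈ K) : G.edist a b ≤ 1 := by
  rw [edist_le_one_iff_adj_or_eq]
  by_cases hab : a = b
  · exact .inr hab
  · exact .inl (hK a ha b hb hab)

lemma Connected.edist_le_two_of_mem_clique (hconn : G.Connected) (hcover : ∀ x : V, x ∈ K ∨ x ∈ S)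
    (hK : ∀ a ∈ K, ∀ b ∈ K, a ≠ b → G.Adj a b) (hS : ∀ a ∈ S, ∀ b ∈ S, ¬ G.Adj a b) {a : V}
    (ha : a ∈ K) (b : V) : G.edist a b ≤ 2 := by
  rcases hcover b with hb | hb
  · exact (edist_le_one_of_mem_clique hK ha hb).trans (by norm_num)
  by_cases hab : a = b
  · simp [hab]
  have : Nontrivial V := ⟨⟨a, b, hab⟩⟩
  obtain ⟨w, hbw⟩ := hconn.preconnected.exists_adj_of_nontrivial b
  have hw : w ∈ K := mem_clique_of_adj_of_mem_indep hcover hS hb hbw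
  calc G.edist a b ≤ G.edist a w + G.edist w b := G.edist_triangle
    _ ≤ 1 + 1 := add_le_add (edist_le_one_of_mem_clique hK ha hw)
      (edist_le_one_iff_adj_or_eq.2 (.inl hbw.symm))
    _ = 2 := by norm_num

lemma Connected.subset_indep_of_ddIS (hconn : G.Connected) (hcover : ∀ x : V, x ∈ K ∨ x ∈ S)
    (hK : ∀ a ∈ K, ∀ b ∈ K, a ≠ b → G.Adj a b) (hS : ∀ a ∈ S, ∀ b ∈ S, ¬ G.Adj a b) {I : Set V}
    (hI : DdIS G 3 I) (hnt : I.Nontrivial) : I ⊆ S := by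
  intro u hu
  refine (hcover u).resolve_left fun huK ↦ ?_
  obtain ⟨v, hv, hvu⟩ := hnt.exists_ne u
  exact hvu (hI.eq_of_edist_le_two hu hv
    (hconn.edist_le_two_of_mem_clique hcover hK hS huK v)).symm

end SimpleGraph

theorem stmt5_general {V : Type*} (G : SimpleGraph V) (K S : Set V)
    (hcover : ∀ x : V, x ∈ K ∨ x ∈ S)
    (hK : ∀ a ∈ K, ∀ b ∈ K, a ≠ b → G.Adj a b)
    (hS : ∀ a ∈ S, ∀ b ∈ S, ¬ G.Adj a b)
    (hconn : G.Connected)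
    (I : Set V) (hI : DdIS G 3 I) (hcard : I.Nontrivial) :
    ∀ x ∈ I, ∀ y, G.Adj x y → y ∉ I → ¬ DdIS G 3 ((I \ {x}) ∪ {y}) := by
  intro x hx y hxy hyI hI'
  have hIS : I ⊆ S := hconn.subset_indep_of_ddIS hcover hK hS hI hcard
  have hy : y ∈ K :=
    SimpleGraph.mem_clique_of_adj_of_mem_indep hcover hS (hIS hx) hxy
  obtain ⟨z, hz, hzx⟩ := hcard.exists_ne x
  have hyz : y = z := hI'.eq_of_edist_le_two (.inr rfl) (.inl ⟨hz, hzx⟩)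
    (hconn.edist_le_two_of_mem_clique hcover hK hS hy z)
  exact hyI (hyz ▸ hz)

theorem stmt5 {V : Type*} (G : SimpleGraph V) (K S : Set V)
    (hcover : ∀ x : V, x ∈ K ∨ x ∈ S) (hdisj : ∀ x : V, ¬(x ∈ K ∧ x ∈ S))
    (hK : ∀ a ∈ K, ∀ b ∈ K, a ≠ b → G.Adj a b)
    (hS : ∀ a ∈ S, ∀ b ∈ S, ¬ G.Adj a b)
    (hconn : G.Connected)
    (I : Set V) (hI : DdIS G 3 I) (hcard : I.Nontrivial) :
    ∀ x ∈ I, ∀ y, G.Adj x y → y ∉ I → ¬ DdIS G 3 ((I \ {x}) ∪ {y}) :=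
  stmt5_general G K S hcover hK hS hconn I hI hcard
end

section
/- Let T be a tree, d ≥ 2, I a distance-d independent set of T, and u ∈ I with |V(T)| ≥ 2. If for some neighbor v of u, every vertex w ∈ I with dist_T(v,w) = d−1 and w ≠ u admits a slide within its subtree (i.e., some neighbor w' of w in the subtree T^v_w away from v with (I ∩ V(T^v_w) \ {w}) ∪ {w'} a distance-d independent set of T^v_w), and these subtrees T^v_w are pairwise vertex-disjoint, then after performing one such slide in each subtree, (I' \ {u}) ∪ {v} is a distance-d independent set of T, where I' is the resulting set. In particular, the subtrees T^v_w for distinct w ∈ I ∩ N^{d−1}_T(v) \ {u} are pairwise disjoint. -/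
/-- In a tree rooted at `v`, the subtree `T^v_w` consists of `w` and its descendants,
i.e. the vertices whose path to `v` passes through `w`. -/
def subtreeSet {V : Type*} (T : SimpleGraph V) (v w : V) : Set V :=
  {x | T.dist v x = T.dist v w + T.dist w x}

/-!
Put `S = I ∩ N^{d-1}(v) \ {u}`. Every other vertex of `I \ {u}` is at distance at least `d` from
`v`, because it is at distance at least `d` from the neighbour `u` of `v`, and every slid vertex
`g w` with `w ∈ S` is at distance exactly `d` from `v`; so `v` can join the new set. In a tree the
path from a vertex outside the subtree `T^v_w` to a vertex inside it passes through `w`. Hence the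
slid vertex `g w` is far from everything outside `T^v_w` (distances grow by one through `w`), it is
far from what remains of `I` inside `T^v_w` by the local slide condition, and two slid vertices are
at least as far apart as the vertices of `I` they came from, since their subtrees are disjoint:
subtrees rooted at distinct vertices of the same depth never meet.
-/

open SimpleGraph

section DdIS

variable {V : Type*} {G : SimpleGraph V} {d : ℕ} {I : Set V}

lemma SimpleGraph.Connected.le_edist_iff (hG : G.Connected) {a b : V} :
    (d : ℕ∞) ≤ G.edist a b ↔ d ≤ G.dist a b := by
  rw [← (hG a b).coe_dist_eq_edist, Nat.cast_le]

lemma DdIS.subset {J : Set V} (hJ : DdIS G d J) (h : I ⊆ J) : DdIS G d I :=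
  fun a ha b hb hab => hJ a (h ha) b (h hb) hab

lemma Set.Subsingleton.ddIS (hI : I.Subsingleton) : DdIS G d I :=
  fun _ ha _ hb hab => absurd (hI ha hb) hab

lemma DdIS.union {A B : Set V} (hA : DdIS G d A) (hB : DdIS G d B)
    (hAB : ∀ a ∈ A, ∀ b ∈ B, a ≠ b → (d : ℕ∞) ≤ G.edist a b) : DdIS G d (A ∪ B) := by
  rintro a (ha | ha) b (hb | hb) hab
  · exact hA a ha b hb hab
  · exact hAB a ha b hb hab
  · exact edist_comm (G := G) ▸ hAB b hb a ha hab.symm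
  · exact hB a ha b hb hab

lemma DdIS.le_dist_add_one_of_adj (hI : DdIS G d I) (hG : G.Connected) {u v a : V} (hu : u ∈ I)
    (ha : a ∈ I) (hau : a ≠ u) (huv : G.Adj u v) : d ≤ G.dist v a + 1 := by
  have hua := hG.le_edist_iff.1 (hI u hu a ha hau.symm)
  have htriangle := hG.dist_triangle (u := u) (v := v) (w := a)
  rw [dist_eq_one_iff_adj.2 huv] at htriangle
  omega

end DdIS

namespace SimpleGraph

variable {V : Type*} {G : SimpleGraph V} {a v w x : V}

lemma Walk.dist_add_dist_eq_of_mem_support (q : G.Walk a x) (hq : q.length = G.dist a x)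
    (hw : w ∈ q.support) : G.dist a w + G.dist w x = G.dist a x := by
  classical
  have htake : G.dist a w ≤ (q.takeUntil w hw).length := dist_le _
  have hdrop : G.dist w x ≤ (q.dropUntil w hw).length := dist_le _
  have hsplit := congrArg Walk.length (q.take_spec hw)
  rw [Walk.length_append] at hsplit
  have := (q.dropUntil w hw).reachable.dist_triangle_right a
  omega

lemma IsAcyclic.support_subset_support_of_isPath (hG : G.IsAcyclic) {p : G.Walk a x}
    (hp : p.IsPath) (q : G.Walk a x) : p.support ⊆ q.support := by
  classical
  have hpq : p = q.bypass :=
    congrArg Subtype.val ((hG.subsingleton_path a x).elim ⟨p, hp⟩ ⟨q.bypass, q.bypass_isPath⟩)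
  exact hpq ▸ q.support_bypass_subset_support

lemma IsTree.mem_support_of_dist_add_dist_eq (hG : G.IsTree)
    (h : G.dist a w + G.dist w x = G.dist a x) (q : G.Walk a x) : w ∈ q.support := by
  obtain ⟨p₁, hp₁⟩ := hG.connected.exists_walk_length_eq_dist a w
  obtain ⟨p₂, hp₂⟩ := hG.connected.exists_walk_length_eq_dist w x
  have hp : (p₁.append p₂).IsPath := by
    refine (p₁.append p₂).isPath_of_length_eq_dist ?_
    rw [Walk.length_append, hp₁, hp₂, h]
  exact hG.isAcyclic.support_subset_support_of_isPath hp q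
    ((Walk.mem_support_append_iff _ _).2 (Or.inl p₁.end_mem_support))

lemma IsTree.dist_eq_add_of_mem_subtreeSet (hG : G.IsTree) (hx : x ∈ subtreeSet G v w)
    (ha : a ∉ subtreeSet G v w) : G.dist a x = G.dist a w + G.dist w x := by
  obtain ⟨pva, hpva⟩ := hG.connected.exists_walk_length_eq_dist v a
  obtain ⟨pax, hpax⟩ := hG.connected.exists_walk_length_eq_dist a x
  rcases (Walk.mem_support_append_iff _ _).1
      (hG.mem_support_of_dist_add_dist_eq hx.symm (pva.append pax)) with hw | hw
  · exact absurd (pva.dist_add_dist_eq_of_mem_support hpva hw).symm ha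
  · exact (pax.dist_add_dist_eq_of_mem_support hpax hw).symm

lemma IsTree.disjoint_subtreeSet (hG : G.IsTree) {w' : V} (hne : w ≠ w')
    (h : G.dist v w = G.dist v w') : Disjoint (subtreeSet G v w) (subtreeSet G v w') := by
  refine Set.disjoint_left.2 fun x (hx : _ = _) (hx' : _ = _) => ?_
  by_cases hw' : w' ∈ subtreeSet G v w
  · have hw' : G.dist v w' = G.dist v w + G.dist w w' := hw'
    exact hne (hG.connected.dist_eq_zero_iff.1 (by omega))
  · have := hG.dist_eq_add_of_mem_subtreeSet hx hw'
    exact hne (hG.connected.dist_eq_zero_iff.1 (by omega)).symm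

lemma IsTree.le_dist_of_slide (hG : G.IsTree) {d : ℕ} {I : Set V} (hI : DdIS G d I) {g : V}
    (hw : w ∈ I) (hg : g ∈ subtreeSet G v w) (hwg : G.Adj w g)
    (hslide : DdIS G d (((I ∩ subtreeSet G v w) \ {w}) ∪ {g}))
    (ha : a ∈ I) (haw : a ≠ w) (hag : a ≠ g) : d ≤ G.dist a g := by
  by_cases hsub : a ∈ subtreeSet G v w
  · exact hG.connected.le_edist_iff.1 (hslide a (Or.inl ⟨⟨ha, hsub⟩, haw⟩) g (Or.inr rfl) hag)
  · have := hG.connected.le_edist_iff.1 (hI a ha w hw haw)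
    rw [hG.dist_eq_add_of_mem_subtreeSet hg hsub, dist_eq_one_iff_adj.2 hwg]
    omega

lemma IsTree.dist_le_dist_of_adj_of_disjoint (hG : G.IsTree) {w' g g' : V}
    (hdisj : Disjoint (subtreeSet G v w) (subtreeSet G v w'))
    (hg : g ∈ subtreeSet G v w) (hwg : G.Adj w g) (hg' : g' ∈ subtreeSet G v w')
    (hwg' : G.Adj w' g') : G.dist w w' ≤ G.dist g g' := by
  have hg'w : g' ∉ subtreeSet G v w := Set.disjoint_right.1 hdisj hg'
  have hthrough := hG.dist_eq_add_of_mem_subtreeSet hg hg'w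
  have htriangle := hG.connected.dist_triangle (u := w) (v := g') (w := w')
  rw [dist_eq_one_iff_adj.2 hwg] at hthrough
  rw [dist_comm (u := g'), dist_eq_one_iff_adj.2 hwg'] at htriangle
  rw [dist_comm (u := g), hthrough, dist_comm (u := g')]
  omega

lemma IsTree.ddIS_image_of_pairwiseDisjoint (hG : G.IsTree) {d : ℕ} {I S : Set V}
    (hI : DdIS G d I) (hSI : S ⊆ I) (hS : S.PairwiseDisjoint (subtreeSet G v)) {g : V → V}
    (hg : ∀ w ∈ S, g w ∈ subtreeSet G v w ∧ G.Adj w (g w)) : DdIS G d (g '' S) := by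
  rintro _ ⟨w, hw, rfl⟩ _ ⟨w', hw', rfl⟩ hne
  have hww' : w ≠ w' := by rintro rfl; exact hne rfl
  refine (hI w (hSI hw) w' (hSI hw') hww').trans ?_
  obtain ⟨hgw, hwg⟩ := hg w hw
  obtain ⟨hgw', hwg'⟩ := hg w' hw'
  rw [← (hG.connected _ _).coe_dist_eq_edist, ← (hG.connected _ _).coe_dist_eq_edist, Nat.cast_le]
  exact hG.dist_le_dist_of_adj_of_disjoint (hS hw hw' hww') hgw hwg hgw' hwg'

end SimpleGraph

theorem stmt16 {V : Type*} (T : SimpleGraph V) (hT : T.IsTree) (d : ℕ) (hd : 2 ≤ d)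
    (I : Set V) (hI : DdIS T d I) (u : V) (hu : u ∈ I) (v : V) (hadj : T.Adj u v)
    (g : V → V)
    (hg : ∀ w ∈ I, w ≠ u → T.dist v w = d - 1 →
      g w ∈ subtreeSet T v w ∧ T.Adj w (g w) ∧
        DdIS T d (((I ∩ subtreeSet T v w) \ {w}) ∪ {g w})) :
    (∀ w ∈ I, ∀ w' ∈ I, w ≠ u → w' ≠ u → T.dist v w = d - 1 → T.dist v w' = d - 1 →
        w ≠ w' → Disjoint (subtreeSet T v w) (subtreeSet T v w')) ∧
      DdIS T d
        (((((I \ {w | w ∈ I ∧ w ≠ u ∧ T.dist v w = d - 1}) ∪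
            g '' {w | w ∈ I ∧ w ≠ u ∧ T.dist v w = d - 1}) \ {u}) ∪ {v})) := by
  have hc := hT.connected
  set S := {w | w ∈ I ∧ w ≠ u ∧ T.dist v w = d - 1}
  have hdisj : S.PairwiseDisjoint (subtreeSet T v) :=
    fun w hw w' hw' hne => hT.disjoint_subtreeSet hne (hw.2.2.trans hw'.2.2.symm)
  refine ⟨fun w hw w' hw' hwu hw'u hwd hw'd => hdisj ⟨hw, hwu, hwd⟩ ⟨hw', hw'u, hw'd⟩, ?_⟩
  set A := {a | a ∈ I ∧ a ≠ u ∧ T.dist v a ≠ d - 1}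
  have hA_far : ∀ a ∈ A, (d : ℕ∞) ≤ T.edist a v := by
    rintro a ⟨ha, hau, had⟩
    have := hI.le_dist_add_one_of_adj hc hu ha hau hadj
    rw [hc.le_edist_iff, dist_comm]
    omega
  have hgS_far : ∀ w ∈ S, T.dist (g w) v = d := by
    rintro w ⟨hw, hwu, hwd⟩
    obtain ⟨hgw, hwg, -⟩ := hg w hw hwu hwd
    rw [dist_comm, hgw, hwd, dist_eq_one_iff_adj.2 hwg]
    omega
  have hA_gS : ∀ a ∈ A, ∀ b ∈ g '' S, a ≠ b → (d : ℕ∞) ≤ T.edist a b := by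
    rintro a ⟨ha, -, had⟩ _ ⟨w, ⟨hw, hwu, hwd⟩, rfl⟩ hag
    obtain ⟨hgw, hwg, hslide⟩ := hg w hw hwu hwd
    exact hc.le_edist_iff.2 <|
      hT.le_dist_of_slide hI hw hgw hwg hslide ha (by rintro rfl; exact had hwd) hag
  have hgS : DdIS T d (g '' S) := hT.ddIS_image_of_pairwiseDisjoint hI (fun w hw => hw.1) hdisj
    fun w ⟨hw, hwu, hwd⟩ => (hg w hw hwu hwd).imp_right And.left
  refine DdIS.subset (J := A ∪ g '' S ∪ {v}) (((hI.subset fun a ha => ha.1).union hgS hA_gS).union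
    Set.subsingleton_singleton.ddIS ?_) ?_
  · rintro a (ha | ⟨w, hw, rfl⟩) _ rfl -
    exacts [hA_far a ha, hc.le_edist_iff.2 (hgS_far w hw).ge]
  · rintro x (⟨⟨hxI, hxS⟩ | hxg, hxu⟩ | hxv)
    · exact Or.inl (Or.inl ⟨hxI, hxu, fun h => hxS ⟨hxI, hxu, h⟩⟩)
    · exact Or.inl (Or.inr hxg)
    · exact Or.inr hxv
end

section
/- Let G consist of k ≥ 2 disjoint paths P_1,…,P_k each of length d−1 (d ≥ 3) with endpoints v_i, w_i, where v_i^* (resp. w_i^*) is the neighbor of v_i (resp. w_i) on P_i, together with, for each ordered pair (i,j) with i ≠ j, an internally disjoint path Q_{v_i^*, v_j} of length d−1 joining v_i^* and v_j, and similarly Q_{w_i^*, w_j} joining w_i^* and w_j. Then I = {v_1,…,v_k} is a distance-d independent set of G: for all i ≠ j, dist_G(v_i, v_j) ≥ d. -/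
/-!
Fix `i` and let `φ(x)` be the distance in `G` from `v_i` to `x`, truncated at `d` and written
out explicitly on each path and connector. Along every edge `φ` changes by at most one, so
`φ(y) ≤ φ(x) + dist(x, y)`; since `φ(v_i) = 0` and `φ(v_j) = d` for `j ≠ i`, this gives
`dist(v_i, v_j) ≥ d`.
-/

namespace SimpleGraph

variable {V : Type*} {G : SimpleGraph V} {f : V → ℕ}

theorem Walk.le_add_length_of_adj_le (hf : ∀ x y, G.Adj x y → f y ≤ f x + 1) {u v : V}
    (p : G.Walk u v) : f v ≤ f u + p.length := by
  induction p with
  | nil => simp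
  | cons hadj _ ih =>
    have := hf _ _ hadj
    rw [Walk.length_cons]
    omega

theorem le_add_edist_of_adj_le (hf : ∀ x y, G.Adj x y → f y ≤ f x + 1) (u v : V) :
    (f v : ℕ∞) ≤ f u + G.edist u v := by
  by_cases h : G.Reachable u v
  · obtain ⟨p, hp⟩ := h.exists_walk_length_eq_edist
    rw [← hp]
    exact_mod_cast p.le_add_length_of_adj_le hf
  · simp [edist_eq_top_of_not_reachable h]

end SimpleGraph

abbrev GadgetVertex (k d : ℕ) := (Fin k × Fin d) ⊕ (Bool × Fin k × Fin k × Fin (d - 2))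

def gadgetRel (k d : ℕ) : GadgetVertex k d → GadgetVertex k d → Prop := fun x y =>
  match x, y with
  | Sum.inl (i, a), Sum.inl (j, b) => i = j ∧ (b : ℕ) = (a : ℕ) + 1
  | Sum.inl (i, a), Sum.inr (top, i', j', t) =>
      i' ≠ j' ∧
      ((i = i' ∧ (t : ℕ) = 0 ∧
          ((top = true ∧ (a : ℕ) = 1) ∨ (top = false ∧ (a : ℕ) = d - 2))) ∨
       (i = j' ∧ (t : ℕ) = d - 3 ∧
          ((top = true ∧ (a : ℕ) = 0) ∨ (top = false ∧ (a : ℕ) = d - 1))))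
  | Sum.inr _, Sum.inl _ => False
  | Sum.inr (top, i, j, t), Sum.inr (top', i', j', t') =>
      top = top' ∧ i = i' ∧ j = j' ∧ i ≠ j ∧ (t' : ℕ) = (t : ℕ) + 1

/-- `min d (dist v_i x)` on every vertex lying on the gadget; the vertices `Sum.inr (_, m, m, _)`
are isolated and their value is irrelevant. -/
def gadgetPotential {k d : ℕ} (i : Fin k) : GadgetVertex k d → ℕ
  | Sum.inl (m, a) => if m = i then a else if (a : ℕ) = 1 then d - 1 else d
  | Sum.inr (true, m, n, t) => if n = i then d - 2 - t else if m = i then t + 2 else d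
  | Sum.inr (false, m, _, t) => if m = i ∧ (t : ℕ) = 0 then d - 1 else d

section gadgetPotential

variable {k d : ℕ} (i : Fin k)

theorem gadgetPotential_le_of_gadgetRel {x y : GadgetVertex k d} (h : gadgetRel k d x y) :
    gadgetPotential i y ≤ gadgetPotential i x + 1 ∧
      gadgetPotential i x ≤ gadgetPotential i y + 1 := by
  rcases x with ⟨m, a⟩ | ⟨_ | _, m, n, t⟩ <;> rcases y with ⟨m', a'⟩ | ⟨_ | _, m', n', t'⟩ <;>
    simp only [gadgetRel] at h <;> grind [gadgetPotential]

theorem gadgetPotential_le_of_adj (x y : GadgetVertex k d)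
    (h : (SimpleGraph.fromRel (gadgetRel k d)).Adj x y) :
    gadgetPotential i y ≤ gadgetPotential i x + 1 := by
  rcases (SimpleGraph.fromRel_adj _ _ _).mp h with ⟨-, hxy | hyx⟩
  · exact (gadgetPotential_le_of_gadgetRel i hxy).1
  · exact (gadgetPotential_le_of_gadgetRel i hyx).2

theorem gadgetPotential_self (h : 0 < d) : gadgetPotential i (Sum.inl (i, ⟨0, h⟩)) = 0 := by
  simp [gadgetPotential]

theorem gadgetPotential_of_ne {j : Fin k} (hij : i ≠ j) (h : 0 < d) :
    gadgetPotential i (Sum.inl (j, ⟨0, h⟩)) = d := by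
  simp [gadgetPotential, hij.symm]

end gadgetPotential

/-- The gadget graph: `k` disjoint paths `P_i` of length `d-1` (vertices `Sum.inl (i, a)`,
`a = 0, …, d-1`, with `v_i = (i,0)`, `v_i^* = (i,1)`, `w_i^* = (i,d-2)`, `w_i = (i,d-1)`),
together with, for every ordered pair `(i,j)` with `i ≠ j`, a connector path of length `d-1`
from `v_i^*` to `v_j` with internal vertices `Sum.inr (true, i, j, t)` (`t = 0, …, d-3`),
and a connector path of length `d-1` from `w_i^*` to `w_j` with internal vertices
`Sum.inr (false, i, j, t)`. Then `{v_1, …, v_k}` is a distance-`d` independent set. -/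
theorem stmt18 (k d : ℕ) (hd : 3 ≤ d)
    (G : SimpleGraph ((Fin k × Fin d) ⊕ (Bool × Fin k × Fin k × Fin (d - 2))))
    (hG : G = SimpleGraph.fromRel (fun x y =>
      match x, y with
      | Sum.inl (i, a), Sum.inl (j, b) => i = j ∧ (b : ℕ) = (a : ℕ) + 1
      | Sum.inl (i, a), Sum.inr (top, i', j', t) =>
          i' ≠ j' ∧
          ((i = i' ∧ (t : ℕ) = 0 ∧
              ((top = true ∧ (a : ℕ) = 1) ∨ (top = false ∧ (a : ℕ) = d - 2))) ∨
           (i = j' ∧ (t : ℕ) = d - 3 ∧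
              ((top = true ∧ (a : ℕ) = 0) ∨ (top = false ∧ (a : ℕ) = d - 1))))
      | Sum.inr _, Sum.inl _ => False
      | Sum.inr (top, i, j, t), Sum.inr (top', i', j', t') =>
          top = top' ∧ i = i' ∧ j = j' ∧ i ≠ j ∧ (t' : ℕ) = (t : ℕ) + 1)) :
    ∀ i j : Fin k, i ≠ j →
      (d : ℕ∞) ≤ G.edist (Sum.inl (i, ⟨0, by omega⟩)) (Sum.inl (j, ⟨0, by omega⟩)) := by
  intro i j hij
  subst hG
  have h := SimpleGraph.le_add_edist_of_adj_le (G := .fromRel (gadgetRel k d))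
    (gadgetPotential_le_of_adj i) (Sum.inl (i, ⟨0, by omega⟩)) (Sum.inl (j, ⟨0, by omega⟩))
  rwa [gadgetPotential_self, gadgetPotential_of_ne i hij, Nat.cast_zero, zero_add] at h
end
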